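/- Suppose m = 2, u₁, u₂ is a basis of V over E orthogonal with respect to Φ, d₁ := Φ(u₁,u₁), d₂ := Φ(u₂,u₂), and σ₀ : E → ℝ is a ring embedding with σ₀(d₁) > 0 and σ₀(d₂) > 0. Let α be the E-linear endomorphism of V determined by α(u₁) = −d₁·u₂ and α(u₂) = d₂·u₁. Then: (1) α is not multiplication by any element of E, i.e. there is no a ∈ E with α(v) = a·v for all v ∈ V; (2) α∘α = multiplication by −d₁·d₂; and (3) for every f ∈ V ⊗_ℚ ℂ satisfying e•f = σ₀(e)·f for all e ∈ E and B_ℂ(f,f) = 0, the ℂ-linear extension of α to V ⊗_ℚ ℂ maps f into the line ℂ·f; in fact if f ≠ 0 it maps f to λ·f for some λ ∈ ℂ with λ² = −σ₀(d₁)·σ₀(d₂). -/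

import Mathlib

open scoped TensorProduct

/-- The action of `e : E` on `ℂ ⊗[ℚ] V` (the `E`-module structure
`e • (c ⊗ v) = c ⊗ (e • v)` on `V ⊗_ℚ ℂ`). -/
noncomputable def actC (E : Type*) {V : Type*} [Field E] [CharZero E]
    [AddCommGroup V] [Module E V] [Module ℚ V] [IsScalarTower ℚ E V] (e : E) :
    ℂ ⊗[ℚ] V →ₗ[ℂ] ℂ ⊗[ℚ] V :=
  LinearMap.baseChange ℂ ((LinearMap.lsmul E V e).restrictScalars ℚ)

/-!
On `ℂ ⊗_ℚ V` the functionals `c ⊗ v ↦ c · τ(vᵢ)`, for `τ` running over the embeddings `E → ℂ`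
and `vᵢ` the coordinates of `v` in the basis `u`, form a basis of the dual space (Dedekind
independence of characters plus a dimension count). A vector `f` on which `E` acts through `σ₀`
has only its two `σ₀`-coordinates `z₀, z₁` nonzero; on such vectors
`B(f,f) = σ₀(d₁) z₀² + σ₀(d₂) z₁²` and `α` acts by `(z₀, z₁) ↦ (σ₀(d₂) z₁, -σ₀(d₁) z₀)`.
The determinant of `z` and `αz` is `-B(f,f)`, so an isotropic `f` is an eigenvector of `α`,
and `α² = -d₁d₂` makes the eigenvalue square to `-σ₀(d₁) σ₀(d₂)`.
-/

open Module

section TensorCoord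

variable {K E Ω V ι : Type*} [Field K] [Field E] [Field Ω] [Algebra K E] [Algebra K Ω]
  [AddCommGroup V] [Module E V] [Module K V] [IsScalarTower K E V]

noncomputable def tensorCoord (u : Basis ι E V) (τ : E →ₐ[K] Ω) (i : ι) : Ω ⊗[K] V →ₗ[Ω] Ω :=
  LinearMap.liftBaseChange Ω (τ.toLinearMap ∘ₗ (u.coord i).restrictScalars K)

@[simp]
lemma tensorCoord_tmul (u : Basis ι E V) (τ : E →ₐ[K] Ω) (i : ι) (c : Ω) (v : V) :
    tensorCoord u τ i (c ⊗ₜ v) = c * τ (u.repr v i) := by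
  simp [tensorCoord, smul_eq_mul]

lemma tensorCoord_baseChange [Fintype ι] [DecidableEq ι] (u : Basis ι E V) (τ : E →ₐ[K] Ω)
    (α : V →ₗ[E] V) (i : ι) (x : Ω ⊗[K] V) :
    tensorCoord u τ i ((α.restrictScalars K).baseChange Ω x) =
      ∑ j, τ (LinearMap.toMatrix u u α i j) * tensorCoord u τ j x := by
  induction x using TensorProduct.induction_on with
  | zero => simp
  | tmul c v =>
    simp only [LinearMap.baseChange_tmul, LinearMap.coe_restrictScalars, tensorCoord_tmul,
      ← LinearMap.toMatrix_mulVec_repr u u α v, Matrix.mulVec, dotProduct, map_sum, map_mul,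
      Finset.mul_sum]
    exact Finset.sum_congr rfl fun j _ => by ring
  | add x y hx hy => simp only [map_add, hx, hy, mul_add, Finset.sum_add_distrib]

lemma tensorCoord_one_tmul_smul_basis [DecidableEq ι] (u : Basis ι E V) (τ : E →ₐ[K] Ω)
    (e : E) (i j : ι) : tensorCoord u τ i (1 ⊗ₜ (e • u j)) = if i = j then τ e else 0 := by
  rw [tensorCoord_tmul, map_smul, u.repr_self, Finsupp.smul_single, Finsupp.single_apply]
  split_ifs <;> simp_all [eq_comm]

theorem linearIndependent_tensorCoord [Fintype ι] [FiniteDimensional K E] (u : Basis ι E V) :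
    LinearIndependent Ω fun p : (E →ₐ[K] Ω) × ι => tensorCoord u p.1 p.2 := by
  classical
  have hdedekind : LinearIndependent Ω fun τ : E →ₐ[K] Ω => ((τ : E →* Ω) : E → Ω) :=
    (linearIndependent_monoidHom E Ω).comp _ fun τ₁ τ₂ h =>
      AlgHom.ext fun x => DFunLike.congr_fun h x
  rw [Fintype.linearIndependent_iff]
  rintro a ha ⟨τ, j⟩
  refine Fintype.linearIndependent_iff.1 hdedekind (fun τ' => a (τ', j)) (funext fun e => ?_) τ
  have := LinearMap.congr_fun ha (1 ⊗ₜ (e • u j))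
  simpa [-tensorCoord_tmul, Fintype.sum_prod_type, tensorCoord_one_tmul_smul_basis] using this

theorem eq_zero_of_forall_tensorCoord_eq_zero [Fintype ι] [FiniteDimensional K E]
    [Algebra.IsSeparable K E] [IsAlgClosed Ω] (u : Basis ι E V) {f : Ω ⊗[K] V}
    (hf : ∀ τ i, tensorCoord u τ i f = 0) : f = 0 := by
  have : FiniteDimensional E V := .of_basis u
  have : FiniteDimensional K V := .trans K E V
  have hspan := (linearIndependent_tensorCoord (K := K) (Ω := Ω) u).span_eq_top_of_card_eq_finrank'
    (by rw [Subspace.dual_finrank_eq, Module.finrank_baseChange, Fintype.card_prod, AlgHom.card,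
      ← Module.finrank_mul_finrank K E V, Module.finrank_eq_card_basis u])
  have hker : Submodule.span Ω (Set.range fun p : (E →ₐ[K] Ω) × ι => tensorCoord u p.1 p.2) ≤
      LinearMap.ker (Module.Dual.eval Ω _ f) :=
    Submodule.span_le.2 (Set.range_subset_iff.2 fun p => hf p.1 p.2)
  rw [hspan] at hker
  exact (Module.forall_dual_apply_eq_zero_iff Ω f).1 fun ψ => hker Submodule.mem_top

theorem bilin_eq_sum_tensorCoord [Fintype ι] [FiniteDimensional K E] [Algebra.IsSeparable K E]
    [IsAlgClosed Ω] (u : Basis ι E V) (Φ : LinearMap.BilinForm E V)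
    (B : Ω ⊗[K] V →ₗ[Ω] Ω ⊗[K] V →ₗ[Ω] Ω)
    (hB : ∀ (c c' : Ω) (x y : V),
      B (c ⊗ₜ x) (c' ⊗ₜ y) = c * c' * algebraMap K Ω (Algebra.trace K E (Φ x y)))
    (x y : Ω ⊗[K] V) :
    B x y = ∑ τ : E →ₐ[K] Ω, ∑ i, ∑ j,
      τ (Φ (u i) (u j)) * tensorCoord u τ i x * tensorCoord u τ j y := by
  induction x using TensorProduct.induction_on with
  | zero => simp
  | add x₁ x₂ h₁ h₂ =>
    simp only [map_add, LinearMap.add_apply, h₁, h₂, ← Finset.sum_add_distrib, add_mul, mul_add]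
  | tmul c v =>
    induction y using TensorProduct.induction_on with
    | zero => simp
    | add y₁ y₂ h₁ h₂ => simp only [map_add, h₁, h₂, ← Finset.sum_add_distrib, mul_add]
    | tmul c' w =>
      rw [hB, trace_eq_sum_embeddings, Finset.mul_sum]
      refine Finset.sum_congr rfl fun τ _ => ?_
      rw [← LinearMap.BilinForm.sum_repr_mul_repr_mul (B := Φ) u v w]
      simp only [Finsupp.sum_fintype, smul_eq_mul, zero_mul, mul_zero, Finset.sum_const_zero,
        implies_true, map_sum, map_mul, tensorCoord_tmul, Finset.mul_sum]
      exact Finset.sum_congr rfl fun i _ => Finset.sum_congr rfl fun j _ => by ring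

end TensorCoord

section Eigenvector

variable {E V ι : Type*} [Field E] [NumberField E]
  [AddCommGroup V] [Module E V] [Module ℚ V] [IsScalarTower ℚ E V]

lemma tensorCoord_actC (u : Basis ι E V) (τ : E →ₐ[ℚ] ℂ) (i : ι) (e : E) (x : ℂ ⊗[ℚ] V) :
    tensorCoord u τ i (actC E e x) = τ e * tensorCoord u τ i x := by
  induction x using TensorProduct.induction_on with
  | zero => simp
  | tmul c v =>
    simp only [actC, LinearMap.baseChange_tmul, LinearMap.coe_restrictScalars,
      LinearMap.lsmul_apply, tensorCoord_tmul, map_smul, Finsupp.smul_apply, smul_eq_mul, map_mul]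
    ring
  | add x y hx hy => simp only [map_add, hx, hy, mul_add]

lemma actC_baseChange (α : V →ₗ[E] V) (e : E) (x : ℂ ⊗[ℚ] V) :
    actC E e ((α.restrictScalars ℚ).baseChange ℂ x) =
      (α.restrictScalars ℚ).baseChange ℂ (actC E e x) := by
  simp only [actC, ← LinearMap.comp_apply, ← LinearMap.baseChange_comp]
  congr 2
  ext v
  simp

lemma tensorCoord_eq_zero_of_actC_eq_smul (u : Basis ι E V) {σ τ : E →ₐ[ℚ] ℂ} (hτ : τ ≠ σ)
    {f : ℂ ⊗[ℚ] V} (hf : ∀ e, actC E e f = σ e • f) (i : ι) : tensorCoord u τ i f = 0 := by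
  obtain ⟨e, he⟩ : ∃ e, τ e ≠ σ e := not_forall.1 fun h => hτ (AlgHom.ext h)
  have h := tensorCoord_actC u τ i e f
  rw [hf, map_smul, smul_eq_mul] at h
  have h' : (τ e - σ e) * tensorCoord u τ i f = 0 := by rw [sub_mul, h, sub_self]
  exact (mul_eq_zero.1 h').resolve_left (sub_ne_zero.2 he)

lemma eq_of_actC_eq_smul_of_tensorCoord_eq [Fintype ι] (u : Basis ι E V) {σ : E →ₐ[ℚ] ℂ}
    {f g : ℂ ⊗[ℚ] V} (hf : ∀ e, actC E e f = σ e • f) (hg : ∀ e, actC E e g = σ e • g)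
    (h : ∀ i, tensorCoord u σ i f = tensorCoord u σ i g) : f = g := by
  have hfg : ∀ e, actC E e (f - g) = σ e • (f - g) := fun e => by
    rw [map_sub, hf, hg, smul_sub]
  refine sub_eq_zero.1 (eq_zero_of_forall_tensorCoord_eq_zero u fun τ i => ?_)
  obtain rfl | hτ := eq_or_ne τ σ
  · rw [map_sub, h, sub_self]
  · exact tensorCoord_eq_zero_of_actC_eq_smul u hτ hfg i

lemma bilin_self_eq_of_actC_eq_smul [Fintype ι] (u : Basis ι E V) (Φ : LinearMap.BilinForm E V)
    (B : ℂ ⊗[ℚ] V →ₗ[ℂ] ℂ ⊗[ℚ] V →ₗ[ℂ] ℂ)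
    (hB : ∀ (c c' : ℂ) (x y : V),
      B (c ⊗ₜ x) (c' ⊗ₜ y) = c * c' * algebraMap ℚ ℂ (Algebra.trace ℚ E (Φ x y)))
    {σ : E →ₐ[ℚ] ℂ} {f : ℂ ⊗[ℚ] V} (hf : ∀ e, actC E e f = σ e • f) :
    B f f = ∑ i, ∑ j, σ (Φ (u i) (u j)) * tensorCoord u σ i f * tensorCoord u σ j f := by
  rw [bilin_eq_sum_tensorCoord u Φ B hB, Finset.sum_eq_single σ _ (by simp)]
  intro τ _ hτ
  simp [tensorCoord_eq_zero_of_actC_eq_smul u hτ hf]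

lemma bilin_self_eq_of_actC_eq_smul_of_orthogonal [Fintype ι] (u : Basis ι E V)
    (Φ : LinearMap.BilinForm E V) (hΦ : ∀ i j, i ≠ j → Φ (u i) (u j) = 0)
    (B : ℂ ⊗[ℚ] V →ₗ[ℂ] ℂ ⊗[ℚ] V →ₗ[ℂ] ℂ)
    (hB : ∀ (c c' : ℂ) (x y : V),
      B (c ⊗ₜ x) (c' ⊗ₜ y) = c * c' * algebraMap ℚ ℂ (Algebra.trace ℚ E (Φ x y)))
    {σ : E →ₐ[ℚ] ℂ} {f : ℂ ⊗[ℚ] V} (hf : ∀ e, actC E e f = σ e • f) :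
    B f f = ∑ i, σ (Φ (u i) (u i)) * tensorCoord u σ i f ^ 2 := by
  rw [bilin_self_eq_of_actC_eq_smul u Φ B hB hf]
  refine Finset.sum_congr rfl fun i _ => ?_
  rw [Finset.sum_eq_single i (fun j _ hj => by rw [hΦ i j hj.symm, map_zero, zero_mul, zero_mul])
    (by simp), sq, mul_assoc]

lemma baseChange_eq_smul_of_actC_eq_smul [Fintype ι] [DecidableEq ι] (u : Basis ι E V)
    (α : V →ₗ[E] V) {σ : E →ₐ[ℚ] ℂ} {f : ℂ ⊗[ℚ] V} (hf : ∀ e, actC E e f = σ e • f) {lam : ℂ}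
    (h : ∀ i, ∑ j, σ (LinearMap.toMatrix u u α i j) * tensorCoord u σ j f =
      lam * tensorCoord u σ i f) :
    (α.restrictScalars ℚ).baseChange ℂ f = lam • f := by
  refine eq_of_actC_eq_smul_of_tensorCoord_eq u (fun e => by rw [actC_baseChange, hf, map_smul])
    (fun e => by rw [map_smul, hf, smul_comm]) fun i => ?_
  rw [tensorCoord_baseChange, h, map_smul, smul_eq_mul]

lemma baseChange_baseChange_of_actC_eq_smul {α : V →ₗ[E] V} {c : E} (hα : ∀ v, α (α v) = c • v)
    {σ : E →ₐ[ℚ] ℂ} {f : ℂ ⊗[ℚ] V} (hf : ∀ e, actC E e f = σ e • f) :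
    (α.restrictScalars ℚ).baseChange ℂ ((α.restrictScalars ℚ).baseChange ℂ f) = σ c • f := by
  rw [← hf, actC, ← LinearMap.comp_apply, ← LinearMap.baseChange_comp]
  congr 2
  ext v
  exact hα v

lemma sq_eq_of_baseChange_eq_smul {α : V →ₗ[E] V} {c : E} (hα : ∀ v, α (α v) = c • v)
    {σ : E →ₐ[ℚ] ℂ} {f : ℂ ⊗[ℚ] V} (hf : ∀ e, actC E e f = σ e • f) (hf0 : f ≠ 0) {lam : ℂ}
    (hlam : (α.restrictScalars ℚ).baseChange ℂ f = lam • f) : lam ^ 2 = σ c := by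
  have h := baseChange_baseChange_of_actC_eq_smul hα hf
  rw [hlam, map_smul, hlam, smul_smul, ← sq] at h
  exact smul_left_injective ℂ hf0 h

end Eigenvector

lemma exists_mul_eq_of_mul_sq_add_mul_sq_eq_zero {F : Type*} [Field F] {a b z₀ z₁ : F}
    (hb : b ≠ 0) (h : a * z₀ ^ 2 + b * z₁ ^ 2 = 0) :
    ∃ lam, b * z₁ = lam * z₀ ∧ -a * z₀ = lam * z₁ := by
  obtain rfl | hz₀ := eq_or_ne z₀ 0
  · have hz₁ : z₁ = 0 := by simpa [hb] using h
    exact ⟨0, by simp [hz₁]⟩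
  · refine ⟨b * z₁ / z₀, by field_simp, ?_⟩
    field_simp
    linear_combination -h

theorem stmt14_general (E V : Type*) [Field E] [NumberField E]
    [AddCommGroup V] [Module E V] [Module ℚ V] [IsScalarTower ℚ E V]
    (Φ : V → V → E)
    (hΦadd1 : ∀ x x' y, Φ (x + x') y = Φ x y + Φ x' y)
    (hΦsmul1 : ∀ (e : E) (x y : V), Φ (e • x) y = e * Φ x y)
    (hΦsymm : ∀ x y, Φ x y = Φ y x)
    (u : Module.Basis (Fin 2) E V)
    (horth : Φ (u 0) (u 1) = 0)
    (d₁ d₂ : E) (hd₁ : d₁ = Φ (u 0) (u 0)) (hd₂ : d₂ = Φ (u 1) (u 1))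
    (σ₀ : E →+* ℝ) (hσ₀1 : 0 < σ₀ d₁) (hσ₀2 : 0 < σ₀ d₂)
    (α : V →ₗ[E] V) (hα1 : α (u 0) = (-d₁) • u 1) (hα2 : α (u 1) = d₂ • u 0)
    (B : (ℂ ⊗[ℚ] V) →ₗ[ℂ] (ℂ ⊗[ℚ] V) →ₗ[ℂ] ℂ)
    (hB : ∀ (c c' : ℂ) (x y : V),
      B (c ⊗ₜ[ℚ] x) (c' ⊗ₜ[ℚ] y) = c * c' * ((Algebra.trace ℚ E (Φ x y) : ℚ) : ℂ)) :
    (¬ ∃ a : E, ∀ v : V, α v = a • v) ∧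
    (∀ v : V, α (α v) = (-(d₁ * d₂)) • v) ∧
    (∀ f : ℂ ⊗[ℚ] V,
      (∀ e : E, actC E e f = ((σ₀ e : ℝ) : ℂ) • f) → B f f = 0 →
      (∃ lam : ℂ, LinearMap.baseChange ℂ (α.restrictScalars ℚ) f = lam • f) ∧
      (f ≠ 0 → ∃ lam : ℂ,
        LinearMap.baseChange ℂ (α.restrictScalars ℚ) f = lam • f ∧
        lam ^ 2 = -(((σ₀ d₁ : ℝ) : ℂ) * ((σ₀ d₂ : ℝ) : ℂ)))) := by
  have hαα : ∀ v, α (α v) = (-(d₁ * d₂)) • v := LinearMap.congr_fun <|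
    show α ∘ₗ α = (-(d₁ * d₂)) • LinearMap.id from
      u.ext fun i => by fin_cases i <;> simp [hα1, hα2, smul_smul, mul_comm]
  refine ⟨fun ⟨a, ha⟩ => ?_, hαα, fun f hf hBf => ?_⟩
  · have h : d₁ = 0 := by simpa using congr_arg (u.repr · 1) ((ha (u 0)).symm.trans hα1)
    exact hσ₀1.ne' (by rw [h, map_zero])
  obtain ⟨σ, hσ⟩ : ∃ σ : E →ₐ[ℚ] ℂ, ∀ e, σ e = σ₀ e :=
    ⟨(Complex.ofRealHom.comp σ₀).toRatAlgHom, fun _ => rfl⟩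
  have hfσ : ∀ e, actC E e f = σ e • f := by simpa only [hσ] using hf
  let Φ' : LinearMap.BilinForm E V := LinearMap.mk₂ E Φ hΦadd1 hΦsmul1
    (fun x y y' => by rw [hΦsymm, hΦadd1, hΦsymm y, hΦsymm y'])
    (fun e x y => by rw [hΦsymm, hΦsmul1, hΦsymm y, smul_eq_mul])
  have hΦ'orth : ∀ i j, i ≠ j → Φ' (u i) (u j) = 0 := by
    intro i j hij
    fin_cases i <;> fin_cases j <;> simp [Φ', horth, hΦsymm (u 1) (u 0)] at hij ⊢
  rw [bilin_self_eq_of_actC_eq_smul_of_orthogonal u Φ' hΦ'orth B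
    (fun c c' x y => by rw [hB, eq_ratCast]; rfl) hfσ, Fin.sum_univ_two] at hBf
  simp only [Φ', LinearMap.mk₂_apply, ← hd₁, ← hd₂] at hBf
  obtain ⟨lam, h₀, h₁⟩ := exists_mul_eq_of_mul_sq_add_mul_sq_eq_zero
    (by rw [hσ]; exact_mod_cast hσ₀2.ne') hBf
  have hlam : (α.restrictScalars ℚ).baseChange ℂ f = lam • f := by
    refine baseChange_eq_smul_of_actC_eq_smul u α hfσ fun i => ?_
    fin_cases i
    · simpa [Fin.sum_univ_two, LinearMap.toMatrix_apply, hα1, hα2] using h₀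
    · simpa [Fin.sum_univ_two, LinearMap.toMatrix_apply, hα1, hα2] using h₁
  refine ⟨⟨lam, hlam⟩, fun hf0 => ⟨lam, hlam, ?_⟩⟩
  rw [sq_eq_of_baseChange_eq_smul hαα hfσ hf0 hlam, map_neg, map_mul, hσ, hσ]

/-- `E` totally real, `m = 2`, `u₁, u₂` a `Φ`-orthogonal `E`-basis of
`V`, `d₁ = Φ(u₁,u₁)`, `d₂ = Φ(u₂,u₂)`, `σ₀ : E → ℝ` with `σ₀(d₁) > 0`, `σ₀(d₂) > 0`,
and `α` the `E`-linear endomorphism with `α(u₁) = −d₁·u₂`, `α(u₂) = d₂·u₁`.  Then: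
(1) `α` is not multiplication by any element of `E`; (2) `α∘α` is multiplication by
`−d₁·d₂`; (3) every `f ∈ V ⊗_ℚ ℂ` with `e•f = σ₀(e)·f` for all `e ∈ E` and
`B(f,f) = 0` is mapped by the `ℂ`-linear extension of `α` into the line `ℂ·f`; in
fact if `f ≠ 0` it is mapped to `λ·f` with `λ² = −σ₀(d₁)·σ₀(d₂)`. -/
theorem stmt14 (E V : Type*) [Field E] [NumberField E]
    (htotreal : ∀ (σ : E →+* ℂ) (x : E), (σ x).im = 0)
    [AddCommGroup V] [Module E V] [Module ℚ V] [IsScalarTower ℚ E V]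
    (Φ : V → V → E)
    (hΦadd1 : ∀ x x' y, Φ (x + x') y = Φ x y + Φ x' y)
    (hΦsmul1 : ∀ (e : E) (x y : V), Φ (e • x) y = e * Φ x y)
    (hΦsymm : ∀ x y, Φ x y = Φ y x)
    (hΦnondeg : ∀ x, (∀ y, Φ x y = 0) → x = 0)
    (u : Module.Basis (Fin 2) E V)
    (horth : Φ (u 0) (u 1) = 0)
    (d₁ d₂ : E) (hd₁ : d₁ = Φ (u 0) (u 0)) (hd₂ : d₂ = Φ (u 1) (u 1))
    (σ₀ : E →+* ℝ) (hσ₀1 : 0 < σ₀ d₁) (hσ₀2 : 0 < σ₀ d₂)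
    (α : V →ₗ[E] V) (hα1 : α (u 0) = (-d₁) • u 1) (hα2 : α (u 1) = d₂ • u 0)
    (B : (ℂ ⊗[ℚ] V) →ₗ[ℂ] (ℂ ⊗[ℚ] V) →ₗ[ℂ] ℂ)
    (hB : ∀ (c c' : ℂ) (x y : V),
      B (c ⊗ₜ[ℚ] x) (c' ⊗ₜ[ℚ] y) = c * c' * ((Algebra.trace ℚ E (Φ x y) : ℚ) : ℂ)) :
    (¬ ∃ a : E, ∀ v : V, α v = a • v) ∧
    (∀ v : V, α (α v) = (-(d₁ * d₂)) • v) ∧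
    (∀ f : ℂ ⊗[ℚ] V,
      (∀ e : E, actC E e f = ((σ₀ e : ℝ) : ℂ) • f) → B f f = 0 →
      (∃ lam : ℂ, LinearMap.baseChange ℂ (α.restrictScalars ℚ) f = lam • f) ∧
      (f ≠ 0 → ∃ lam : ℂ,
        LinearMap.baseChange ℂ (α.restrictScalars ℚ) f = lam • f ∧
        lam ^ 2 = -(((σ₀ d₁ : ℝ) : ℂ) * ((σ₀ d₂ : ℝ) : ℂ)))) :=
  stmt14_general E V Φ hΦadd1 hΦsmul1 hΦsymm u horth d₁ d₂ hd₁ hd₂ σ₀ hσ₀1 hσ₀2 α hα1 hα2 B hB
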